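/- Let S be a finite semigroup and let c ∈ S. If c and c² are D-equivalent, then c and c² are H-equivalent, and the H-class of c is a group. -/

import Mathlib

/-!
Work in the monoid `S¹ = WithOne S`, where `c D c²` says `c = p c c r`. Iterating `x = u x v` gives
`x = uⁿ x vⁿ`; choosing `n` with `uⁿ` idempotent yields `uⁿ x = x`, and dually `x vⁿ = x`.
With `u = p c` this puts `c` in `S¹ c²`, with `v = c r` in `c² S¹`, so `c H c²`. Applying the
same argument to `c = q c c` and `c = c c s` shows that the idempotent power `e = cⁿ` satisfies
`e c = c = c e`; as `e ∈ c S¹ ∩ S¹ c`, this gives `c H e`.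
-/

/-- Green's R relation: `a R b` iff `a S¹ = b S¹`. -/
def GreenR {S : Type*} [Semigroup S] (a b : S) : Prop :=
  (a = b ∨ ∃ u, a * u = b) ∧ (b = a ∨ ∃ u, b * u = a)

/-- Green's L relation: `a L b` iff `S¹ a = S¹ b`. -/
def GreenL {S : Type*} [Semigroup S] (a b : S) : Prop :=
  (a = b ∨ ∃ u, u * a = b) ∧ (b = a ∨ ∃ u, u * b = a)

/-- Green's H relation. -/
def GreenH {S : Type*} [Semigroup S] (a b : S) : Prop := GreenR a b ∧ GreenL a b

/-- Green's D relation: `D = L ∘ R`. -/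
def GreenD {S : Type*} [Semigroup S] (a b : S) : Prop := ∃ c, GreenL a c ∧ GreenR c b

/-- The state of the dual Cayley automaton, started in state `s`,
after reading the first `n` symbols of the sequence `a`. -/
def stateAt {S : Type*} [Semigroup S] (s : S) (a : ℕ → S) : ℕ → S
  | 0 => s
  | n + 1 => stateAt s a n * a n

/-- The transformation of `S^∞` induced by the state `s` of the dual
Cayley automaton: in state `t`, reading symbol `x`, output `x*t` and move to `t*x`. -/
def dualAct {S : Type*} [Semigroup S] (s : S) : (ℕ → S) → (ℕ → S) :=
  fun a n => a n * stateAt s a n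

/-- The dual Cayley automaton semigroup `C*(S)`, as the subsemigroup of
transformations of `S^∞` generated by the states. -/
def dualCayley (S : Type*) [Semigroup S] : Subsemigroup (Function.End (ℕ → S)) :=
  Subsemigroup.closure (Set.range (dualAct (S := S)))

/-- Apply the states of a list in order (leftmost first) to a sequence:
the action of the product of states `ā₁ ⋯ ā_k`. -/
def applyList {S : Type*} [Semigroup S] (l : List S) (a : ℕ → S) : ℕ → S :=
  l.foldl (fun b s => dualAct s b) a

/-- Prepend a symbol to an infinite sequence. -/
def consSeq {S : Type*} (x : S) (a : ℕ → S) : ℕ → S :=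
  fun n => match n with
  | 0 => x
  | n + 1 => a n

/-- The list of sections: `secList [a₁,…,a_k] x = [a₁x, a₂(xa₁), a₃(xa₁a₂), …]`,
the state to which `ā₁ ⋯ ā_k` moves after reading `x`. -/
def secList {S : Type*} [Semigroup S] : List S → S → List S
  | [], _ => []
  | a :: l, x => (a * x) :: secList l (x * a)

section Monoid

variable {M : Type*} [Monoid M]

theorem exists_isIdempotentElem_pow [Finite M] (a : M) : ∃ n ≠ 0, IsIdempotentElem (a ^ n) := by
  obtain ⟨i, j, hij, hpow⟩ := Finite.exists_ne_map_eq_of_infinite (a ^ · : ℕ → M)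
  wlog hlt : i < j generalizing i j
  · exact this j i hij.symm hpow.symm (by omega)
  have periodic : ∀ k m, i ≤ m → a ^ (m + k * (j - i)) = a ^ m := by
    intro k
    induction k with
    | zero => simp
    | succ k ih =>
      intro m hm
      calc a ^ (m + (k + 1) * (j - i)) = a ^ (m + k * (j - i) - i) * a ^ j := by
            rw [← pow_add]; congr 1; rw [add_mul]; omega
        _ = a ^ (m + k * (j - i)) := by
            rw [← hpow, ← pow_add]; congr 1; omega
        _ = a ^ m := ih m hm
  refine ⟨(i + 1) * (j - i), mul_ne_zero i.succ_ne_zero (by omega), ?_⟩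
  rw [IsIdempotentElem, ← pow_add]
  exact periodic (i + 1) _ (i.le_succ.trans (Nat.le_mul_of_pos_right _ (by omega)))

theorem eq_pow_mul_mul_pow {x u v : M} (h : x = u * x * v) (n : ℕ) : x = u ^ n * x * v ^ n := by
  induction n with
  | zero => simp
  | succ n ih =>
    calc x = u ^ n * (u * x * v) * v ^ n := by rw [← h]; exact ih
      _ = u ^ (n + 1) * x * v ^ (n + 1) := by
          rw [pow_succ, pow_succ']; simp only [mul_assoc]

theorem pow_mul_eq_of_eq_mul_mul {x u v : M} (h : x = u * x * v) {n : ℕ}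
    (hu : IsIdempotentElem (u ^ n)) : u ^ n * x = x := by
  rw [eq_pow_mul_mul_pow h n]
  simp only [← mul_assoc, hu.eq]

theorem mul_pow_eq_of_eq_mul_mul {x u v : M} (h : x = u * x * v) {n : ℕ}
    (hv : IsIdempotentElem (v ^ n)) : x * v ^ n = x := by
  rw [eq_pow_mul_mul_pow h n]
  simp only [mul_assoc, hv.eq]

theorem exists_mul_mul_self_eq_of_eq_mul_mul_mul [Finite M] {c p r : M}
    (h : c = p * c * c * r) : ∃ q, q * (c * c) = c := by
  obtain ⟨n, hn, hidem⟩ := exists_isIdempotentElem_pow (p * c)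
  obtain ⟨k, rfl⟩ := Nat.exists_eq_add_one_of_ne_zero hn
  refine ⟨(p * c) ^ k * p, ?_⟩
  calc (p * c) ^ k * p * (c * c) = (p * c) ^ (k + 1) * c := by
        rw [pow_succ]; simp only [mul_assoc]
    _ = c := pow_mul_eq_of_eq_mul_mul h hidem

theorem exists_mul_self_mul_eq_of_eq_mul_mul_mul [Finite M] {c p r : M}
    (h : c = p * c * c * r) : ∃ s, c * c * s = c := by
  obtain ⟨n, hn, hidem⟩ := exists_isIdempotentElem_pow (c * r)
  obtain ⟨k, rfl⟩ := Nat.exists_eq_add_one_of_ne_zero hn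
  refine ⟨r * (c * r) ^ k, ?_⟩
  calc c * c * (r * (c * r) ^ k) = c * (c * r) ^ (k + 1) := by
        rw [pow_succ']; simp only [mul_assoc]
    _ = c := mul_pow_eq_of_eq_mul_mul (h.trans (mul_assoc _ _ _)) hidem

theorem exists_isIdempotentElem_pow_mul_eq [Finite M] {c q s : M}
    (hq : q * (c * c) = c) (hs : c * c * s = c) :
    ∃ n ≠ 0, IsIdempotentElem (c ^ n) ∧ c ^ n * c = c ∧ c * c ^ n = c := by
  obtain ⟨n, hn, hidem⟩ := exists_isIdempotentElem_pow c
  exact ⟨n, hn, hidem, pow_mul_eq_of_eq_mul_mul hs.symm hidem,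
    mul_pow_eq_of_eq_mul_mul (by rw [mul_assoc, hq]) hidem⟩

end Monoid

section WithOne

variable {S : Type*} [Semigroup S]

theorem WithOne.exists_mul_coe_eq_coe_iff {a b : S} :
    (∃ u : WithOne S, u * a = b) ↔ a = b ∨ ∃ u, u * a = b := by
  constructor
  · rintro ⟨_ | u, hu⟩
    · exact Or.inl (WithOne.coe_inj.mp ((one_mul _).symm.trans hu))
    · exact Or.inr ⟨u, WithOne.coe_inj.mp hu⟩
  · rintro (rfl | ⟨u, rfl⟩)
    · exact ⟨1, one_mul _⟩
    · exact ⟨u, rfl⟩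

theorem WithOne.exists_coe_mul_eq_coe_iff {a b : S} :
    (∃ u : WithOne S, a * u = b) ↔ a = b ∨ ∃ u, a * u = b := by
  constructor
  · rintro ⟨_ | u, hu⟩
    · exact Or.inl (WithOne.coe_inj.mp ((mul_one _).symm.trans hu))
    · exact Or.inr ⟨u, WithOne.coe_inj.mp hu⟩
  · rintro (rfl | ⟨u, rfl⟩)
    · exact ⟨1, mul_one _⟩
    · exact ⟨u, rfl⟩

theorem WithOne.exists_coe_eq_mul_coe (u : WithOne S) (a : S) :
    ∃ b : S, (b : WithOne S) = u * a := by
  rcases u with _ | u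
  · exact ⟨a, (one_mul _).symm⟩
  · exact ⟨u * a, rfl⟩

theorem greenH_iff {a b : S} : GreenH a b ↔
    ((∃ u : WithOne S, a * u = b) ∧ ∃ u : WithOne S, b * u = a) ∧
      ((∃ u : WithOne S, u * a = b) ∧ ∃ u : WithOne S, u * b = a) := by
  simp only [GreenH, GreenR, GreenL, WithOne.exists_mul_coe_eq_coe_iff,
    WithOne.exists_coe_mul_eq_coe_iff]

end WithOne

/-- In a finite semigroup, if `c D c²` then `c H c²` and the `H`-class of `c`
is a group (contains an idempotent). -/
theorem stmt1 {S : Type*} [Semigroup S] [Fintype S] (c : S)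
    (h : GreenD c (c * c)) :
    GreenH c (c * c) ∧ ∃ e : S, GreenH c e ∧ e * e = e := by
  have : Finite (WithOne S) := inferInstanceAs (Finite (Option S))
  obtain ⟨d, hcd, hdc⟩ := h
  obtain ⟨p, hp⟩ := WithOne.exists_mul_coe_eq_coe_iff.mpr hcd.2
  obtain ⟨r, hr⟩ := WithOne.exists_coe_mul_eq_coe_iff.mpr hdc.2
  have hc : (c : WithOne S) = p * c * c * r := by
    rw [mul_assoc p, mul_assoc p, ← WithOne.coe_mul, hr, hp]
  obtain ⟨q, hq⟩ := exists_mul_mul_self_eq_of_eq_mul_mul_mul hc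
  obtain ⟨s, hs⟩ := exists_mul_self_mul_eq_of_eq_mul_mul_mul hc
  obtain ⟨n, hn, hidem, hec, hce⟩ := exists_isIdempotentElem_pow_mul_eq hq hs
  obtain ⟨k, rfl⟩ := Nat.exists_eq_add_one_of_ne_zero hn
  obtain ⟨e, he⟩ := WithOne.exists_coe_eq_mul_coe ((c : WithOne S) ^ k) c
  rw [← pow_succ] at he
  refine ⟨greenH_iff.mpr ⟨⟨⟨c, rfl⟩, s, hs⟩, ⟨c, rfl⟩, q, hq⟩, e, greenH_iff.mpr ?_, ?_⟩
  · rw [he]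
    exact ⟨⟨⟨_, (pow_succ' _ _).symm⟩, c, hec⟩, ⟨_, (pow_succ _ _).symm⟩, c, hce⟩
  · exact WithOne.coe_inj.mp (by rw [WithOne.coe_mul, he, hidem.eq])
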